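/- arXiv:1909.01198 — 5 statements merged into one kernel-verified Lean document; each statement's English description precedes it below -/
import Mathlib

section
/- For every T > 3, the number of reduced rationals p/q in the Cantor middle-thirds set with purely periodic base-3 expansion and 0 < q ≤ T is at least T^d / 2, where d = log 2 / log 3. -/
/-!
Let `L` be maximal with `3 ^ L ≤ T`. Repeating a word of `L` ternary digits from `{0, 2}` forever
gives a point of the Cantor set equal to `N / (3 ^ L - 1)` for an integer `N`, so its reduced
denominator is below `3 ^ L ≤ T`. Distinct words give distinct rationals, which yields `2 ^ L`
of them, while `T < 3 ^ (L + 1)` gives `T ^ d < (3 ^ d) ^ (L + 1) = 2 ^ (L + 1)`.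
-/

def cantorMiddleThirds : Set ℝ :=
  {x | ∃ a : ℕ → ℕ, (∀ i, a i = 0 ∨ a i = 2) ∧ x = ∑' i : ℕ, (a i : ℝ) / 3 ^ (i + 1)}

open Finset Function Real Fin.NatCast

lemma summable_div_three_pow_succ {a : ℕ → ℕ} (ha : ∀ i, a i ≤ 2) :
    Summable fun i => (a i : ℝ) / 3 ^ (i + 1) := by
  refine .of_nonneg_of_le (fun i => by positivity) (fun i => ?_)
    ((summable_geometric_of_lt_one (by norm_num) (by norm_num : (1 / 3 : ℝ) < 1)).mul_left 2)
  rw [one_div_pow, mul_one_div]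
  exact div_le_div₀ (by norm_num) (by exact_mod_cast ha i) (by positivity)
    (pow_le_pow_right₀ (by norm_num) i.le_succ)

/-- Shifting a period of length `L` divides the value by `3 ^ L`, so `x = P + x / 3 ^ L`. -/
lemma tsum_div_three_pow_succ_of_periodic {a : ℕ → ℕ} {L : ℕ} (ha : ∀ i, a i ≤ 2) (hL : 0 < L)
    (hper : Periodic a L) :
    ∑' i, (a i : ℝ) / 3 ^ (i + 1)
      = (∑ j ∈ range L, (a j : ℝ) * 3 ^ (L - (j + 1))) / (3 ^ L - 1) := by
  set x := ∑' i, (a i : ℝ) / 3 ^ (i + 1)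
  have hshift : ∑' i, (a (i + L) : ℝ) / 3 ^ (i + L + 1) = x / 3 ^ L := by
    rw [div_eq_mul_one_div x, ← tsum_mul_right]
    refine tsum_congr fun i => ?_
    rw [hper i, add_right_comm, pow_add]
    field_simp
  have hx : ∑ j ∈ range L, (a j : ℝ) / 3 ^ (j + 1) + x / 3 ^ L = x := by
    rw [← hshift]; exact (summable_div_three_pow_succ ha).sum_add_tsum_nat_add L
  have hnum : ∑ j ∈ range L, (a j : ℝ) * 3 ^ (L - (j + 1))
      = (∑ j ∈ range L, (a j : ℝ) / 3 ^ (j + 1)) * 3 ^ L := by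
    rw [sum_mul]
    refine sum_congr rfl fun j hj => ?_
    rw [← pow_sub_mul_pow 3 (mem_range.1 hj : j + 1 ≤ L)]
    field_simp
  have h3L : (1 : ℝ) < 3 ^ L := one_lt_pow₀ (by norm_num) hL.ne'
  rw [eq_div_iff (by linarith), hnum]
  field_simp at hx
  linarith

lemma injective_sum_mul_pow_sub_succ (b L : ℕ) :
    Injective fun d : Fin L → Fin b => ∑ j, (d j : ℕ) * b ^ (L - (j + 1)) := by
  have hrev (d : Fin L → Fin b) :
      ∑ j, (d j : ℕ) * b ^ (L - (j + 1)) = finFunctionFinEquiv (d ∘ Fin.rev) := by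
    rw [finFunctionFinEquiv_apply]
    refine (Fintype.sum_equiv Fin.revPerm _ _ fun j => ?_).symm
    simp only [comp_apply, Fin.revPerm_apply, Fin.val_rev]
    congr 2
    omega
  intro d e h
  simpa [Fin.rev_surjective.injective_comp_right.eq_iff] using
    finFunctionFinEquiv.injective (Fin.ext ((hrev d).symm.trans (h.trans (hrev e))))

lemma den_natCast_div_le (m : ℕ) {n : ℕ} (hn : 0 < n) : ((m : ℚ) / n).den ≤ n :=
  Nat.le_of_dvd hn <|
    Int.natCast_dvd_natCast.1 (by simpa [Rat.divInt_eq_div] using Rat.den_dvd m n)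

lemma rpow_log_two_div_log_three_le {T : ℝ} {n : ℕ} (hT : 0 ≤ T) (hTn : T ≤ 3 ^ n) :
    T ^ (log 2 / log 3) ≤ 2 ^ n := by
  have h32 : (3 : ℝ) ^ (log 2 / log 3) = 2 := by
    rw [log_div_log, rpow_logb] <;> norm_num
  calc T ^ (log 2 / log 3) ≤ ((3 : ℝ) ^ n) ^ (log 2 / log 3) :=
        rpow_le_rpow hT hTn (by positivity)
    _ = 2 ^ n := by rw [← rpow_pow_comm (by norm_num), h32]

section PeriodicWord

variable {L : ℕ}

def periodicTernary (d : Fin L → Fin 3) : ℚ :=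
  (∑ j, (d j : ℕ) * 3 ^ (L - (j + 1)) : ℕ) / (3 ^ L - 1)

lemma periodicTernary_den_lt (hL : L ≠ 0) (d : Fin L → Fin 3) :
    (periodicTernary d).den < 3 ^ L := by
  have h3L : 1 < 3 ^ L := Nat.one_lt_pow hL (by norm_num)
  have := den_natCast_div_le (∑ j, (d j : ℕ) * 3 ^ (L - (j + 1))) (n := 3 ^ L - 1) (by omega)
  rw [Nat.cast_sub h3L.le, Nat.cast_pow, Nat.cast_one, Nat.cast_ofNat] at this
  exact this.trans_lt (by omega)

lemma injective_periodicTernary (hL : L ≠ 0) : Injective (periodicTernary (L := L)) := by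
  intro d e h
  have h3L : (3 : ℚ) ^ L - 1 ≠ 0 := (sub_pos.2 (one_lt_pow₀ (by norm_num) hL)).ne'
  refine injective_sum_mul_pow_sub_succ 3 L ?_
  exact_mod_cast (div_left_inj' h3L).1 h

variable [NeZero L]

/-- The cast `(i : Fin L)` reduces `i` modulo `L`. -/
def periodicDigits (d : Fin L → Fin 3) (i : ℕ) : ℕ := d (i : Fin L)

lemma periodic_periodicDigits (d : Fin L → Fin 3) : Periodic (periodicDigits d) L :=
  fun i => by simp [periodicDigits]

lemma periodicDigits_eq_zero_or_two {d : Fin L → Fin 3}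
    (hd : ∀ j, d j ∈ ({0, 2} : Finset (Fin 3))) (i : ℕ) :
    periodicDigits d i = 0 ∨ periodicDigits d i = 2 := by
  rcases (by simpa using hd i : d i = 0 ∨ d i = 2) with h | h <;> simp [periodicDigits, h]

lemma cast_periodicTernary (d : Fin L → Fin 3) :
    (periodicTernary d : ℝ) = ∑' i, (periodicDigits d i : ℝ) / 3 ^ (i + 1) := by
  rw [tsum_div_three_pow_succ_of_periodic (a := periodicDigits d)
    (fun i => Nat.le_of_lt_succ (d _).isLt) (NeZero.pos L) (periodic_periodicDigits d),
    ← Fin.sum_univ_eq_sum_range]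
  simp [periodicTernary, periodicDigits]

end PeriodicWord

/-- For every `T > 3`, the number of reduced rationals `p/q` in the Cantor set
with purely periodic base-3 expansion and `0 < q ≤ T` is at least
`T^d / 2` where `d = log 2 / log 3`. -/
theorem stmt_5 (T : ℝ) (hT : 3 < T) :
    ∃ S : Finset ℚ,
      (∀ r ∈ S, (r : ℝ) ∈ cantorMiddleThirds ∧ (r.den : ℝ) ≤ T ∧
        ∃ a : ℕ → ℕ, (∀ i, a i = 0 ∨ a i = 2) ∧ (∃ ℓ, 0 < ℓ ∧ ∀ i, a (i + ℓ) = a i) ∧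
          (r : ℝ) = ∑' i : ℕ, (a i : ℝ) / 3 ^ (i + 1)) ∧
      T ^ (Real.log 2 / Real.log 3) / 2 ≤ (S.card : ℝ) := by
  obtain ⟨L, h3L, hT3L⟩ :=
    exists_nat_pow_near (by linarith : (1 : ℝ) ≤ T) (by norm_num : (1 : ℝ) < 3)
  have hL : L ≠ 0 := by rintro rfl; norm_num at hT3L; linarith
  have : NeZero L := ⟨hL⟩
  let words := Fintype.piFinset fun _ : Fin L => ({0, 2} : Finset (Fin 3))
  refine ⟨words.image periodicTernary, ?_, ?_⟩
  · simp only [mem_image]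
    rintro _ ⟨d, hd, rfl⟩
    have hdigits := periodicDigits_eq_zero_or_two (Fintype.mem_piFinset.1 hd)
    have hden : ((periodicTernary d).den : ℝ) < 3 ^ L := by
      exact_mod_cast periodicTernary_den_lt hL d
    exact ⟨⟨_, hdigits, cast_periodicTernary d⟩, by linarith, _, hdigits,
      ⟨L, NeZero.pos L, periodic_periodicDigits d⟩, cast_periodicTernary d⟩
  · have hcard : (words.image periodicTernary).card = 2 ^ L := by
      rw [card_image_of_injective _ (injective_periodicTernary hL), Fintype.card_piFinset]
      simp
    calc T ^ (log 2 / log 3) / 2 ≤ 2 ^ (L + 1) / 2 := by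
          gcongr; exact rpow_log_two_div_log_three_le (by linarith) hT3L.le
      _ = (words.image periodicTernary).card := by rw [hcard]; push_cast; ring
end

section
/- If a reduced rational p/q lies in the Cantor middle-thirds set, q is coprime to 3, and ℓ(q) is the order of 3 mod q, then q divides (3^{ℓ(q)} - 1)/2. -/
/-!
Multiplying a point of the Cantor set by `3` strips off its first ternary digit, `0` or `2`, and
leaves a point of the Cantor set; so `3 ^ n * x = A + S` with `A` even and `S ∈ [0, 1]`. If
`(3 ^ n - 1) * x = N` is an integer, then `N - A = S - x` is an integer in `(-1, 1)` unless
`x ∈ {0, 1}`, hence `N = A` is even (and for `x ∈ {0, 1}`, `N` is `0` or `3 ^ n - 1`).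
For `x = p / q` and `3 ^ ℓ - 1 = q * M` this makes `p * M` even; `q * M` is even as well,
so coprimality of `p` and `q` forces `2 ∣ M`.
-/

open Set

lemma tsum_two_div_three_pow_succ : ∑' i : ℕ, (2 : ℝ) / 3 ^ (i + 1) = 1 := by
  have h : ∀ i : ℕ, (2 : ℝ) / 3 ^ (i + 1) = 2 / 3 * (1 / 3) ^ i := fun i => by
    rw [pow_succ, one_div_pow]; field_simp
  simp only [h]
  rw [tsum_mul_left, tsum_geometric_of_lt_one (by norm_num) (by norm_num)]
  norm_num

lemma summable_two_div_three_pow_succ : Summable fun i : ℕ => (2 : ℝ) / 3 ^ (i + 1) := by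
  by_contra h
  simpa [tsum_eq_zero_of_not_summable h] using tsum_two_div_three_pow_succ

section TernaryDigits

variable {a : ℕ → ℕ}

lemma digit_div_three_pow_succ_le (ha : ∀ i, a i ≤ 2) (i : ℕ) :
    (a i : ℝ) / 3 ^ (i + 1) ≤ 2 / 3 ^ (i + 1) := by
  gcongr
  exact_mod_cast ha i

lemma summable_digit_div_three_pow_succ (ha : ∀ i, a i ≤ 2) :
    Summable fun i => (a i : ℝ) / 3 ^ (i + 1) :=
  summable_two_div_three_pow_succ.of_nonneg_of_le (fun _ => by positivity)
    (digit_div_three_pow_succ_le ha)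

lemma tsum_digit_div_three_pow_succ_mem_Icc (ha : ∀ i, a i ≤ 2) :
    ∑' i, (a i : ℝ) / 3 ^ (i + 1) ∈ Icc 0 1 :=
  ⟨tsum_nonneg fun _ => by positivity,
    tsum_two_div_three_pow_succ ▸ (summable_digit_div_three_pow_succ ha).tsum_le_tsum
      (digit_div_three_pow_succ_le ha) summable_two_div_three_pow_succ⟩

lemma three_mul_tsum_digit_div_three_pow_succ (ha : ∀ i, a i ≤ 2) :
    3 * ∑' i, (a i : ℝ) / 3 ^ (i + 1) = a 0 + ∑' i, (a (i + 1) : ℝ) / 3 ^ (i + 1) := by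
  rw [(summable_digit_div_three_pow_succ ha).tsum_eq_zero_add, mul_add, ← tsum_mul_left]
  congr 1
  · ring
  · congr 1 with i
    rw [pow_succ _ (i + 1)]
    field_simp

end TernaryDigits

lemma cantorMiddleThirds_subset_Icc : cantorMiddleThirds ⊆ Icc 0 1 := by
  rintro x ⟨a, ha, rfl⟩
  exact tsum_digit_div_three_pow_succ_mem_Icc fun i => by have := ha i; omega

lemma exists_even_three_mul_sub_mem_cantorMiddleThirds {x : ℝ}
    (hx : x ∈ cantorMiddleThirds) : ∃ d : ℕ, Even d ∧ 3 * x - d ∈ cantorMiddleThirds := by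
  obtain ⟨a, ha, rfl⟩ := hx
  refine ⟨a 0, by rcases ha 0 with h | h <;> simp [h],
    fun i => a (i + 1), fun i => ha (i + 1), ?_⟩
  rw [three_mul_tsum_digit_div_three_pow_succ fun i => by have := ha i; omega,
    add_sub_cancel_left]

lemma exists_even_three_pow_mul_sub_mem_cantorMiddleThirds {x : ℝ}
    (hx : x ∈ cantorMiddleThirds) (n : ℕ) :
    ∃ A : ℕ, Even A ∧ 3 ^ n * x - A ∈ cantorMiddleThirds := by
  induction n with
  | zero => exact ⟨0, Even.zero, by simpa using hx⟩
  | succ n ih =>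
    obtain ⟨A, hA, hAx⟩ := ih
    obtain ⟨d, hd, hdx⟩ := exists_even_three_mul_sub_mem_cantorMiddleThirds hAx
    refine ⟨3 * A + d, (hA.mul_left 3).add hd, ?_⟩
    convert hdx using 1
    push_cast
    ring

lemma even_of_three_pow_sub_one_mul_eq {x : ℝ} (hx : x ∈ cantorMiddleThirds) (n : ℕ) (N : ℤ)
    (hN : ((3 : ℝ) ^ n - 1) * x = N) : Even N := by
  obtain ⟨hx0, hx1⟩ := cantorMiddleThirds_subset_Icc hx
  rcases hx0.eq_or_lt with rfl | hx0
  · obtain rfl : N = 0 := by exact_mod_cast (by simpa using hN.symm : (N : ℝ) = 0)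
    exact Even.zero
  rcases hx1.eq_or_lt with rfl | hx1
  · obtain rfl : N = 3 ^ n - 1 := by
      exact_mod_cast (by simpa using hN.symm : (N : ℝ) = 3 ^ n - 1)
    exact (Odd.pow (by decide)).sub_odd odd_one
  obtain ⟨A, hA, hS⟩ := exists_even_three_pow_mul_sub_mem_cantorMiddleThirds hx n
  obtain ⟨hS0, hS1⟩ := cantorMiddleThirds_subset_Icc hS
  have hNA : ((N - A : ℤ) : ℝ) = (3 ^ n * x - A) - x := by
    push_cast
    linarith
  have hlt : N - A < 1 := by exact_mod_cast hNA ▸ (by linarith : (3 ^ n * x - A) - x < 1)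
  have hgt : -1 < N - A := by exact_mod_cast hNA ▸ (by linarith : -1 < (3 ^ n * x - A) - x)
  obtain rfl : N = A := by omega
  exact (Int.even_coe_nat A).mpr hA

lemma dvd_pow_orderOf_sub_one (a q : ℕ) : q ∣ a ^ orderOf (a : ZMod q) - 1 := by
  rw [← ZMod.natCast_eq_zero_iff]
  rcases Nat.eq_zero_or_pos (a ^ orderOf (a : ZMod q)) with h | h
  · simp [h]
  · rw [Nat.cast_sub h, Nat.cast_pow, pow_orderOf_eq_one, Nat.cast_one, sub_self]

theorem stmt_11_general (p q : ℕ) (hq : 0 < q) (hcop : Nat.Coprime p q)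
    (hC : (p : ℝ) / q ∈ cantorMiddleThirds) :
    q ∣ (3 ^ orderOf (3 : ZMod q) - 1) / 2 := by
  set ℓ := orderOf (3 : ZMod q)
  obtain ⟨M, hM⟩ : q ∣ 3 ^ ℓ - 1 := by simpa using dvd_pow_orderOf_sub_one 3 q
  have hpM : Even (p * M) := by
    have hMR : (3 : ℝ) ^ ℓ - 1 = q * M := by
      rw [← Nat.cast_mul, ← hM, Nat.cast_sub (Nat.one_le_pow' _ _)]
      norm_num
    refine (Int.even_coe_nat _).mp (even_of_three_pow_sub_one_mul_eq hC ℓ _ ?_)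
    rw [hMR]
    push_cast
    field_simp
  have hqM : Even (q * M) := hM ▸ Nat.Odd.sub_odd (Odd.pow (by decide)) odd_one
  have hM2 : 2 ∣ M := by
    simpa [Nat.gcd_mul_right, hcop] using Nat.dvd_gcd hpM.two_dvd hqM.two_dvd
  obtain ⟨k, rfl⟩ := hM2
  rw [hM, mul_left_comm, Nat.mul_div_cancel_left _ two_pos]
  exact dvd_mul_right q k

/-- If a reduced rational `p/q` lies in the Cantor set and `3 ∤ q`, then
`q` divides `(3^{ℓ(q)} - 1)/2`, where `ℓ(q)` is the order of `3` mod `q`. -/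
theorem stmt_11 (p q : ℕ) (hq : 0 < q) (hpq : p ≤ q) (hcop : Nat.Coprime p q)
    (h3 : ¬ 3 ∣ q) (hC : (p : ℝ) / q ∈ cantorMiddleThirds) :
    q ∣ (3 ^ orderOf (3 : ZMod q) - 1) / 2 :=
  stmt_11_general p q hq hcop hC
end

section
/- The ratio (m(ℓ,2)/m̄(ℓ,3)) / (2/3)^ℓ tends to 2 as ℓ → ∞, where m(ℓ,2) = Σ_{d|ℓ} μ(ℓ/d) 2^d is the number of primitive binary words of length ℓ, and m̄(ℓ,3) is the number of primitive words of length ℓ over {0,1,2} representing an even integer in base 3. -/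
/-!
Every proper divisor of `ℓ` is at most `ℓ / 2`, so the Möbius sum gives
`m(ℓ,2) = 2^ℓ + O(ℓ 2^(ℓ/2))`, and a non-primitive word of length `ℓ` is `k`-periodic for a
proper divisor `k`, so at most `ℓ a^(ℓ/2)` of the `a^ℓ` words are non-primitive.
Since `3` is odd, a ternary word represents an even number iff its digit sum is even, and
`∑_w (-1)^(digit sum of w) = (1 - 1 + 1)^ℓ = 1` shows that exactly `(3^ℓ + 1) / 2` words do.
Hence `2 m̄(ℓ,3) = 3^ℓ + O(ℓ 3^(ℓ/2))`, and the ratio in question is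
`2 (m(ℓ,2) / 2^ℓ) / (2 m̄(ℓ,3) / 3^ℓ) → 2`.
-/

/-- A word of length `ℓ` is primitive if it is not a concatenation of copies of
a shorter word. -/
def IsPrimitiveWord {ℓ a : ℕ} (w : Fin ℓ → Fin a) : Prop :=
  ¬ ∃ k, 0 < k ∧ k ∣ ℓ ∧ k < ℓ ∧
    ∀ i j : Fin ℓ, (i : ℕ) % k = (j : ℕ) % k → w i = w j

/-- `m(ℓ,2) = Σ_{d|ℓ} μ(ℓ/d) 2^d`, the number of primitive binary words of
length `ℓ`. -/
def mPrim (ℓ : ℕ) : ℤ :=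
  ∑ d ∈ ℓ.divisors, ArithmeticFunction.moebius (ℓ / d) * 2 ^ d

/-- `m̄(ℓ,3)`: the number of primitive words of length `ℓ` over `{0,1,2}`
representing an even integer in base 3. -/
noncomputable def mBar (ℓ : ℕ) : ℕ :=
  Set.ncard {w : Fin ℓ → Fin 3 | IsPrimitiveWord w ∧
    Even (∑ j : Fin ℓ, (w j : ℕ) * 3 ^ (ℓ - 1 - (j : ℕ)))}


open Finset Filter Topology

namespace Nat

lemma le_div_two_of_mem_properDivisors {m n : ℕ} (h : m ∈ n.properDivisors) : m ≤ n / 2 := by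
  have hn : n ≠ 0 := by rintro rfl; simp at h
  obtain ⟨k, hk, rfl⟩ := (mem_properDivisors_iff_exists hn).1 h
  rw [Nat.le_div_iff_mul_le two_pos]
  exact Nat.mul_le_mul_left m hk

lemma card_properDivisors_le (n : ℕ) : #n.properDivisors ≤ n :=
  (card_filter_le _ _).trans (by simp)

lemma sum_pow_properDivisors_le {a : ℕ} (ha : 0 < a) (n : ℕ) :
    ∑ d ∈ n.properDivisors, a ^ d ≤ n * a ^ (n / 2) :=
  calc ∑ d ∈ n.properDivisors, a ^ d ≤ ∑ _d ∈ n.properDivisors, a ^ (n / 2) :=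
        sum_le_sum fun d hd => Nat.pow_le_pow_right ha (le_div_two_of_mem_properDivisors hd)
    _ ≤ n * a ^ (n / 2) := by
        rw [sum_const, smul_eq_mul]
        exact Nat.mul_le_mul_right _ (card_properDivisors_le n)

end Nat

lemma even_sum_mul_pow_iff_of_odd {ι : Type*} (s : Finset ι) (d e : ι → ℕ) {b : ℕ} (hb : Odd b) :
    Even (∑ i ∈ s, d i * b ^ e i) ↔ Even (∑ i ∈ s, d i) := by
  simp [Nat.even_iff, sum_nat_mod, Nat.mul_mod, Nat.pow_mod, Nat.odd_iff.1 hb]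

lemma two_mul_card_filter_even {α : Type*} [Fintype α] (f : α → ℕ) :
    2 * (#{x | Even (f x)} : ℤ) = Fintype.card α + ∑ x, (-1) ^ f x := by
  have hsign : ∀ x, (if Even (f x) then 2 else 0 : ℤ) = 1 + (-1) ^ f x := fun x => by
    rcases Nat.even_or_odd (f x) with h | h
    · simp [h, h.neg_one_pow]
    · simp [Nat.not_even_iff_odd.2 h, h.neg_one_pow]
  calc 2 * (#{x | Even (f x)} : ℤ) = ∑ x with Even (f x), (2 : ℤ) := by
        rw [sum_const, nsmul_eq_mul, mul_comm]
    _ = ∑ x, (1 + (-1) ^ f x) := by rw [sum_filter]; simp_rw [hsign]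
    _ = Fintype.card α + ∑ x, (-1) ^ f x := by simp [sum_add_distrib]

lemma sum_neg_one_pow_sum_ternary_digits (ℓ : ℕ) :
    ∑ w : Fin ℓ → Fin 3, (-1 : ℤ) ^ ∑ j, (w j : ℕ) = 1 :=
  calc ∑ w : Fin ℓ → Fin 3, (-1 : ℤ) ^ ∑ j, (w j : ℕ)
        = ∑ w : Fin ℓ → Fin 3, ∏ j, (-1 : ℤ) ^ (w j : ℕ) := by simp_rw [prod_pow_eq_pow_sum]
    _ = (∑ a : Fin 3, (-1 : ℤ) ^ (a : ℕ)) ^ ℓ := by rw [Fintype.sum_pow]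
    _ = 1 := by simp [Fin.sum_univ_three]

lemma card_filter_periodic_le {α : Type*} [Fintype α] [DecidableEq α] {ℓ k : ℕ}
    (hk : 0 < k) (hkℓ : k ≤ ℓ) :
    #{w : Fin ℓ → α | ∀ i j : Fin ℓ, (i : ℕ) % k = j % k → w i = w j} ≤ Fintype.card α ^ k := by
  refine (card_le_card_of_injOn (t := (univ : Finset (Fin k → α)))
    (fun w i => w (Fin.castLE hkℓ i)) (fun _ _ => mem_univ _) ?_).trans (by simp)
  intro w hw w' hw' hww'
  simp only [coe_filter, mem_univ, true_and, Set.mem_ofPred_eq] at hw hw'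
  funext i
  -- a `k`-periodic word is determined by its first `k` letters
  let r : Fin k := ⟨i % k, Nat.mod_lt _ hk⟩
  have hr : ((Fin.castLE hkℓ r : Fin ℓ) : ℕ) % k = (i : ℕ) % k := by simp [r]
  rw [hw i _ hr.symm, hw' i _ hr.symm]
  exact congrFun hww' r

section Words

open scoped Classical

lemma card_not_isPrimitiveWord_le {a : ℕ} (ha : 0 < a) (ℓ : ℕ) :
    #{w : Fin ℓ → Fin a | ¬ IsPrimitiveWord w} ≤ ℓ * a ^ (ℓ / 2) := by
  have hsub : ({w : Fin ℓ → Fin a | ¬ IsPrimitiveWord w} : Finset _) ⊆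
      ℓ.properDivisors.biUnion fun k => {w : Fin ℓ → Fin a | ∀ i j : Fin ℓ, (i : ℕ) % k = j % k → w i = w j} := by
    intro w hw
    obtain ⟨k, -, hkℓ, hlt, hper⟩ := not_not.1 (mem_filter.1 hw).2
    exact mem_biUnion.2 ⟨k, Nat.mem_properDivisors.2 ⟨hkℓ, hlt⟩, mem_filter.2 ⟨mem_univ _, hper⟩⟩
  calc #{w : Fin ℓ → Fin a | ¬ IsPrimitiveWord w}
      ≤ ∑ k ∈ ℓ.properDivisors,
          #{w : Fin ℓ → Fin a | ∀ i j : Fin ℓ, (i : ℕ) % k = j % k → w i = w j} :=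
        (card_le_card hsub).trans card_biUnion_le
    _ ≤ ∑ k ∈ ℓ.properDivisors, a ^ k := sum_le_sum fun k hk => by
        simpa using card_filter_periodic_le (α := Fin a) (Nat.pos_of_mem_properDivisors hk)
          (Nat.mem_properDivisors.1 hk).2.le
    _ ≤ ℓ * a ^ (ℓ / 2) := Nat.sum_pow_properDivisors_le ha ℓ

lemma two_mul_card_even_ternary_value (ℓ : ℕ) :
    2 * (#{w : Fin ℓ → Fin 3 | Even (∑ j : Fin ℓ, (w j : ℕ) * 3 ^ (ℓ - 1 - (j : ℕ)))} : ℤ)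
      = 3 ^ ℓ + 1 := by
  simp_rw [even_sum_mul_pow_iff_of_odd _ _ _ (by decide : Odd 3)]
  rw [two_mul_card_filter_even, sum_neg_one_pow_sum_ternary_digits]
  simp

lemma mBar_eq_card (ℓ : ℕ) :
    mBar ℓ = #{w : Fin ℓ → Fin 3 | IsPrimitiveWord w ∧
      Even (∑ j : Fin ℓ, (w j : ℕ) * 3 ^ (ℓ - 1 - (j : ℕ)))} := by
  rw [mBar, ← Set.ncard_coe_finset, coe_filter]
  simp

lemma abs_two_mul_mBar_sub_le {ℓ : ℕ} (hℓ : ℓ ≠ 0) :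
    |2 * (mBar ℓ : ℤ) - 3 ^ ℓ| ≤ 3 * (ℓ * 3 ^ (ℓ / 2)) := by
  set E : Finset (Fin ℓ → Fin 3) := {w | Even (∑ j : Fin ℓ, (w j : ℕ) * 3 ^ (ℓ - 1 - (j : ℕ)))}
  have hE : 2 * (#E : ℤ) = 3 ^ ℓ + 1 := two_mul_card_even_ternary_value ℓ
  have hsplit : mBar ℓ + #{w ∈ E | ¬ IsPrimitiveWord w} = #E := by
    rw [mBar_eq_card, ← card_filter_add_card_filter_not (s := E) IsPrimitiveWord]
    simp only [E, filter_filter, and_comm]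
  have hnonprim : #{w ∈ E | ¬ IsPrimitiveWord w} ≤ ℓ * 3 ^ (ℓ / 2) :=
    (card_le_card (filter_subset_filter _ (subset_univ E))).trans
      (card_not_isPrimitiveWord_le three_pos ℓ)
  have h1 : (1 : ℤ) ≤ ℓ * 3 ^ (ℓ / 2) := by
    exact_mod_cast Nat.one_le_iff_ne_zero.2 (by positivity)
  rw [abs_le]
  constructor <;> linarith

end Words

lemma abs_mPrim_sub_le {ℓ : ℕ} (hℓ : ℓ ≠ 0) : |mPrim ℓ - 2 ^ ℓ| ≤ ℓ * 2 ^ (ℓ / 2) := by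
  rw [mPrim, ← Nat.cons_self_properDivisors hℓ, sum_cons, Nat.div_self (Nat.pos_of_ne_zero hℓ),
    ArithmeticFunction.moebius_apply_one, one_mul, add_sub_cancel_left]
  calc |∑ d ∈ ℓ.properDivisors, (ArithmeticFunction.moebius (ℓ / d) : ℤ) * 2 ^ d|
      ≤ ∑ d ∈ ℓ.properDivisors, |(ArithmeticFunction.moebius (ℓ / d) : ℤ) * 2 ^ d| :=
        abs_sum_le_sum_abs _ _
    _ ≤ ∑ d ∈ ℓ.properDivisors, (2 : ℤ) ^ d := sum_le_sum fun d _ => by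
        rw [abs_mul, abs_pow, abs_two]
        exact mul_le_of_le_one_left (by positivity) ArithmeticFunction.abs_moebius_le_one
    _ ≤ ℓ * 2 ^ (ℓ / 2) := by exact_mod_cast Nat.sum_pow_properDivisors_le two_pos ℓ

lemma pow_div_two_le_sqrt_pow {b : ℝ} (hb : 1 ≤ b) (n : ℕ) : b ^ (n / 2) ≤ √b ^ n := by
  calc b ^ (n / 2) = √b ^ (2 * (n / 2)) := by rw [pow_mul, Real.sq_sqrt (by linarith)]
    _ ≤ √b ^ n := pow_le_pow_right₀ (Real.one_le_sqrt.2 hb) (Nat.mul_div_le n 2)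

lemma tendsto_div_pow_of_abs_sub_le {b C : ℝ} (hb : 1 < b) (hC : 0 ≤ C) {u : ℕ → ℝ}
    (hu : ∀ᶠ n in atTop, |u n - b ^ n| ≤ C * (n * b ^ (n / 2))) :
    Tendsto (fun n => u n / b ^ n) atTop (𝓝 1) := by
  have hr0 : 0 ≤ √b / b := by positivity
  have hr1 : √b / b < 1 := (div_lt_one (by linarith)).2 (Real.sqrt_lt_self_iff.2 hb)
  have hdev : Tendsto (fun n => u n / b ^ n - 1) atTop (𝓝 0) := by
    refine squeeze_zero_norm' ?_ (by simpa using
      (tendsto_self_mul_const_pow_of_lt_one hr0 hr1).const_mul C)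
    filter_upwards [hu] with n hn
    have hbn : 0 < b ^ n := by positivity
    rw [Real.norm_eq_abs, div_sub_one hbn.ne', abs_div, abs_of_pos hbn, div_le_iff₀ hbn, div_pow,
      mul_assoc, mul_assoc, div_mul_cancel₀ _ hbn.ne']
    exact hn.trans (by gcongr; exact pow_div_two_le_sqrt_pow hb.le n)
  simpa using hdev.add_const 1

/-- The ratio `(m(ℓ,2)/m̄(ℓ,3)) / (2/3)^ℓ` tends to `2` as `ℓ → ∞`. -/
theorem stmt_12 :
    Filter.Tendsto (fun ℓ : ℕ => ((mPrim ℓ : ℝ) / (mBar ℓ : ℝ)) / ((2 / 3 : ℝ) ^ ℓ))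
      Filter.atTop (nhds 2) := by
  have hPrim : Tendsto (fun ℓ : ℕ => (mPrim ℓ : ℝ) / 2 ^ ℓ) atTop (𝓝 1) :=
    tendsto_div_pow_of_abs_sub_le one_lt_two zero_le_one <|
      (eventually_ne_atTop 0).mono fun ℓ hℓ => by
        simpa using (Int.cast_le (R := ℝ)).2 (abs_mPrim_sub_le hℓ)
  have hBar : Tendsto (fun ℓ : ℕ => 2 * (mBar ℓ : ℝ) / 3 ^ ℓ) atTop (𝓝 1) :=
    tendsto_div_pow_of_abs_sub_le (by norm_num) zero_le_three <|
      (eventually_ne_atTop 0).mono fun ℓ hℓ => by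
        simpa using (Int.cast_le (R := ℝ)).2 (abs_two_mul_mBar_sub_le hℓ)
  have hratio : ∀ ℓ : ℕ, 2 * ((mPrim ℓ : ℝ) / 2 ^ ℓ) / (2 * (mBar ℓ : ℝ) / 3 ^ ℓ)
      = ((mPrim ℓ : ℝ) / (mBar ℓ : ℝ)) / ((2 / 3 : ℝ) ^ ℓ) := fun ℓ => by
    rcases eq_or_ne (mBar ℓ : ℝ) 0 with h | h
    · simp [h]
    · rw [div_pow]
      field_simp
  have hlim := (hPrim.const_mul 2).div hBar one_ne_zero
  rw [mul_one, div_one] at hlim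
  exact hlim.congr hratio
end

section
/- The number of primitive words of length ℓ over the alphabet {0,1,...,a-1} representing an even integer in base a equals Σ_{d|ℓ, ℓ/d even} μ(ℓ/d) a^d + Σ_{d|ℓ, ℓ/d odd} μ(ℓ/d) ⌈a^d/2⌉, for odd a. -/
open Finset

theorem even_sum_mul_pow_iff {ι : Type*} (s : Finset ι) (f e : ι → ℕ) {a : ℕ} (ha : Odd a) :
    Even (∑ i ∈ s, f i * a ^ e i) ↔ Even (∑ i ∈ s, f i) := by
  simp only [← ZMod.natCast_eq_zero_iff_even, Nat.cast_sum, Nat.cast_mul, Nat.cast_pow,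
    ZMod.natCast_eq_one_iff_odd.mpr ha, one_pow, mul_one]

theorem sum_neg_one_pow_eq_two_mul_card_filter_even_sub_card {α : Type*} (s : Finset α)
    (f : α → ℕ) : ∑ x ∈ s, (-1 : ℤ) ^ f x = 2 * #{x ∈ s | Even (f x)} - #s := by
  have hcard := card_filter_add_card_filter_not (s := s) fun x => Even (f x)
  rw [← sum_filter_add_sum_filter_not s fun x => Even (f x),
    sum_congr rfl fun x hx => (mem_filter.1 hx).2.neg_one_pow,
    sum_congr rfl fun x hx => (Nat.not_even_iff_odd.1 (mem_filter.1 hx).2).neg_one_pow, ← hcard]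
  simp only [sum_const, nsmul_eq_mul, mul_one, mul_neg, Nat.cast_add]
  ring

theorem sum_fin_neg_one_pow_of_odd {a : ℕ} (ha : Odd a) :
    ∑ x : Fin a, (-1 : ℤ) ^ (x : ℕ) = 1 := by
  rw [Fin.sum_univ_eq_sum_range (fun x => (-1 : ℤ) ^ x), neg_one_geom_sum,
    if_neg (Nat.not_even_iff_odd.2 ha)]

theorem two_mul_card_filter_even_sum_eq_pow_add_one {a : ℕ} (ha : Odd a) (d : ℕ) :
    2 * #{u : Fin d → Fin a | Even (∑ i, (u i : ℕ))} = a ^ d + 1 := by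
  have hsigned : ∑ u : Fin d → Fin a, (-1 : ℤ) ^ (∑ i, (u i : ℕ)) = 1 := by
    simp_rw [← prod_pow_eq_pow_sum]
    rw [← Fintype.prod_sum fun (_ : Fin d) (x : Fin a) => (-1 : ℤ) ^ (x : ℕ)]
    simp [sum_fin_neg_one_pow_of_odd ha]
  rw [sum_neg_one_pow_eq_two_mul_card_filter_even_sub_card] at hsigned
  simp only [card_univ, Fintype.card_fun, Fintype.card_fin, Nat.cast_pow] at hsigned
  zify
  linarith

theorem Int.ceil_natCast_div_two_of_two_mul_eq {K : Type*} [Field K] [LinearOrder K]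
    [IsStrictOrderedRing K] [FloorRing K] {n c : ℕ} (h : 2 * c = n + 1) : ⌈(n : K) / 2⌉ = c := by
  have hK : 2 * (c : K) = n + 1 := by exact_mod_cast h
  rw [Int.ceil_eq_iff]
  push_cast
  constructor <;> linarith

theorem card_filter_eq_sum_moebius_mul_card_filter_dvd {α : Type*} (s : Finset α) (p : α → ℕ)
    {n : ℕ} (hn : 0 < n) :
    (#{x ∈ s | p x = n} : ℤ) =
      ∑ d ∈ n.divisors, ArithmeticFunction.moebius (n / d) * #{x ∈ s | p x ∣ d} := by
  have hfibers : ∀ n > 0, ∑ e ∈ n.divisors, (#{x ∈ s | p x = e} : ℤ) = #{x ∈ s | p x ∣ n} := by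
    intro n hn
    rw [card_eq_sum_card_fiberwise (f := p) (t := n.divisors)]
    · push_cast
      refine sum_congr rfl fun e he => ?_
      rw [filter_filter]
      exact congrArg (fun t => (#t : ℤ)) (filter_congr fun x _ =>
        ⟨fun h => ⟨h ▸ Nat.dvd_of_mem_divisors he, h⟩, And.right⟩)
    · intro x hx
      exact Nat.mem_divisors.2 ⟨(mem_filter.1 hx).2, hn.ne'⟩
  rw [← ArithmeticFunction.sum_eq_iff_sum_smul_moebius_eq.1 hfibers n hn,
    Nat.sum_divisorsAntidiagonal' fun i j =>
      ArithmeticFunction.moebius i • (#{x ∈ s | p x ∣ j} : ℤ)]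
  simp only [smul_eq_mul]

namespace Word

variable {α : Type*} {ℓ : ℕ}

def HasPeriod (w : Fin ℓ → α) (k : ℕ) : Prop :=
  k ∣ ℓ ∧ ∀ i j : Fin ℓ, (i : ℕ) % k = (j : ℕ) % k → w i = w j

instance [DecidableEq α] (w : Fin ℓ → α) (k : ℕ) : Decidable (HasPeriod w k) := by
  unfold HasPeriod; infer_instance

theorem hasPeriod_length (w : Fin ℓ → α) : HasPeriod w ℓ :=
  ⟨dvd_rfl, fun i j hij => by
    rw [Nat.mod_eq_of_lt i.isLt, Nat.mod_eq_of_lt j.isLt, ← Fin.ext_iff] at hij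
    rw [hij]⟩

theorem HasPeriod.gcd (hℓ : 0 < ℓ) {w : Fin ℓ → α} {k₁ k₂ : ℕ}
    (h₁ : HasPeriod w k₁) (h₂ : HasPeriod w k₂) : HasPeriod w (Nat.gcd k₁ k₂) := by
  refine ⟨(Nat.gcd_dvd_left k₁ k₂).trans h₁.1, fun i j hij => ?_⟩
  -- a position congruent to `i` mod `k₁` and to `j` mod `k₂` links `w i` and `w j`
  obtain ⟨t, ht₁, ht₂⟩ := Nat.chineseRemainder' hij
  let p : Fin ℓ := ⟨t % ℓ, Nat.mod_lt t hℓ⟩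
  have hi : w i = w p := h₁.2 i p <| by simp only [p, Nat.mod_mod_of_dvd t h₁.1]; exact ht₁.symm
  have hj : w j = w p := h₂.2 j p <| by simp only [p, Nat.mod_mod_of_dvd t h₂.1]; exact ht₂.symm
  rw [hi, hj]

noncomputable def minPeriod (w : Fin ℓ → α) : ℕ :=
  sInf {k | 0 < k ∧ HasPeriod w k}

theorem minPeriod_spec (hℓ : 0 < ℓ) (w : Fin ℓ → α) :
    0 < minPeriod w ∧ HasPeriod w (minPeriod w) :=
  Nat.sInf_mem (s := {k | 0 < k ∧ HasPeriod w k}) ⟨ℓ, hℓ, hasPeriod_length w⟩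

theorem hasPeriod_iff_minPeriod_dvd (hℓ : 0 < ℓ) (w : Fin ℓ → α) {k : ℕ} (hk : k ∣ ℓ) :
    HasPeriod w k ↔ minPeriod w ∣ k := by
  obtain ⟨hpos, hper⟩ := minPeriod_spec hℓ w
  constructor
  · intro h
    have hgcd : minPeriod w ≤ Nat.gcd (minPeriod w) k :=
      Nat.sInf_le ⟨Nat.gcd_pos_of_pos_left k hpos, hper.gcd hℓ h⟩
    rw [← Nat.gcd_eq_left_iff_dvd]
    exact le_antisymm (Nat.le_of_dvd hpos (Nat.gcd_dvd_left _ _)) hgcd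
  · intro hdvd
    refine ⟨hk, fun i j hij => hper.2 i j ?_⟩
    rw [← Nat.mod_mod_of_dvd i hdvd, hij, Nat.mod_mod_of_dvd j hdvd]

theorem isPrimitiveWord_iff_minPeriod_eq {a : ℕ} (hℓ : 0 < ℓ) (w : Fin ℓ → Fin a) :
    IsPrimitiveWord w ↔ minPeriod w = ℓ := by
  obtain ⟨hpos, hdvd, hper⟩ := minPeriod_spec hℓ w
  constructor
  · intro h
    by_contra hne
    exact h ⟨minPeriod w, hpos, hdvd, lt_of_le_of_ne (Nat.le_of_dvd hℓ hdvd) hne, hper⟩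
  · rintro h ⟨k, hk, hkℓ, hlt, hkper⟩
    have := Nat.le_of_dvd hk ((hasPeriod_iff_minPeriod_dvd hℓ w hkℓ).1 ⟨hkℓ, hkper⟩)
    omega

theorem hasPeriod_repeat {d : ℕ} (m : ℕ) (u : Fin d → α) : HasPeriod (Fin.repeat m u) d :=
  ⟨Dvd.intro_left m rfl, fun _ _ hij => congrArg u (Fin.ext hij)⟩

theorem sum_repeat {M : Type*} [AddCommMonoid M] {d : ℕ} (m : ℕ) (u : Fin d → α) (f : α → M) :
    ∑ j, f (Fin.repeat m u j) = m • ∑ i, f (u i) := by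
  rw [← finProdFinEquiv.sum_comp, Fintype.sum_prod_type]
  simp [Fin.modNat, Nat.add_mul_mod_self_left, Nat.mod_eq_of_lt]

theorem HasPeriod.eq_repeat {d m : ℕ} (hm : 0 < m) {w : Fin (m * d) → α} (h : HasPeriod w d) :
    w = Fin.repeat m (fun i => w (Fin.castLE (Nat.le_mul_of_pos_left d hm) i)) :=
  funext fun j => h.2 _ _ (Nat.mod_mod j d).symm

theorem card_filter_hasPeriod {d : ℕ} (hd : d ∣ ℓ) (hℓ : 0 < ℓ) [Fintype α] [DecidableEq α]
    (f : α → ℕ) (P : ℕ → Prop) [DecidablePred P] :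
    #{w : Fin ℓ → α | HasPeriod w d ∧ P (∑ j, f (w j))} =
      #{u : Fin d → α | P (ℓ / d * ∑ i, f (u i))} := by
  obtain ⟨m, rfl⟩ : ∃ m, ℓ = m * d := ⟨ℓ / d, (Nat.div_mul_cancel hd).symm⟩
  have hm : 0 < m := Nat.pos_of_mul_pos_right hℓ
  rw [Nat.mul_div_cancel m (Nat.pos_of_mul_pos_left hℓ)]
  refine card_nbij' (fun w i => w (Fin.castLE (Nat.le_mul_of_pos_left d hm) i)) (Fin.repeat m)
    ?_ ?_ ?_ ?_
  · intro w hw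
    simp only [coe_filter, Set.mem_ofPred_eq, mem_univ, true_and] at hw ⊢
    rw [← smul_eq_mul, ← sum_repeat, ← hw.1.eq_repeat hm]
    exact hw.2
  · intro u hu
    simp only [coe_filter, Set.mem_ofPred_eq, mem_univ, true_and] at hu ⊢
    rw [sum_repeat]
    exact ⟨hasPeriod_repeat m u, hu⟩
  · intro w hw
    exact (((mem_filter.1 hw).2.1).eq_repeat hm).symm
  · intro u _
    exact funext fun i => congrArg u (Fin.ext (Nat.mod_eq_of_lt i.isLt))

theorem card_filter_even_sum_minPeriod_dvd {a ℓ d : ℕ} (ha : Odd a) (hℓ : 0 < ℓ) (hd : d ∣ ℓ) :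
    (#{w ∈ ({w | Even (∑ j, (w j : ℕ))} : Finset (Fin ℓ → Fin a)) | minPeriod w ∣ d} : ℤ) =
      if Even (ℓ / d) then (a : ℤ) ^ d else ⌈(a : ℚ) ^ d / 2⌉ := by
  rw [filter_filter, filter_congr fun w _ => by
    rw [← hasPeriod_iff_minPeriod_dvd hℓ w hd, and_comm], card_filter_hasPeriod hd hℓ]
  split_ifs with hev
  · rw [filter_true_of_mem fun u _ => hev.mul_right _]
    simp
  · rw [filter_congr fun u _ => by rw [Nat.even_mul, or_iff_right hev], ← Nat.cast_pow,
      Int.ceil_natCast_div_two_of_two_mul_eq (two_mul_card_filter_even_sum_eq_pow_add_one ha d)]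

end Word

open Word in
/-- For odd `a`, the number of primitive words of length `ℓ` over
`{0,…,a-1}` representing an even integer in base `a` equals
`Σ_{d|ℓ, ℓ/d even} μ(ℓ/d) a^d + Σ_{d|ℓ, ℓ/d odd} μ(ℓ/d) ⌈a^d/2⌉`. -/
theorem stmt_13 (a ℓ : ℕ) (ha : Odd a) (hℓ : 0 < ℓ) :
    (Set.ncard {w : Fin ℓ → Fin a | IsPrimitiveWord w ∧
        Even (∑ j : Fin ℓ, (w j : ℕ) * a ^ (ℓ - 1 - (j : ℕ)))} : ℤ) =
      ∑ d ∈ ℓ.divisors.filter (fun d => Even (ℓ / d)),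
        ArithmeticFunction.moebius (ℓ / d) * (a : ℤ) ^ d +
      ∑ d ∈ ℓ.divisors.filter (fun d => Odd (ℓ / d)),
        ArithmeticFunction.moebius (ℓ / d) * ⌈((a : ℚ) ^ d) / 2⌉ := by
  have hset : {w : Fin ℓ → Fin a | IsPrimitiveWord w ∧
      Even (∑ j : Fin ℓ, (w j : ℕ) * a ^ (ℓ - 1 - (j : ℕ)))} =
      ↑({w ∈ ({w | Even (∑ j, (w j : ℕ))} : Finset (Fin ℓ → Fin a)) | minPeriod w = ℓ}) := by
    ext w
    simp [isPrimitiveWord_iff_minPeriod_eq hℓ, even_sum_mul_pow_iff _ _ _ ha, and_comm]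
  rw [hset, Set.ncard_coe_finset, card_filter_eq_sum_moebius_mul_card_filter_dvd _ _ hℓ,
    sum_congr rfl fun d hd => by
      rw [card_filter_even_sum_minPeriod_dvd ha hℓ (Nat.dvd_of_mem_divisors hd), mul_ite],
    sum_ite]
  simp only [Nat.not_even_iff_odd]
end

section
/- Let ω ∈ {0,2}^r and let ω̄ be obtained from ω by swapping digits 0 and 2. Then the purely periodic base-3 number with repeating block ωω̄ (of period 2r) is a rational whose denominator in reduced form divides 3^r + 1, and it lies in the Cantor middle-thirds set. -/
open Finset

namespace Function.Periodic

variable {a : ℕ → ℝ} {p : ℕ} {b : ℝ}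

theorem summable_div_pow (ha : Periodic a p) (hp : 0 < p) (hb : 1 < b) :
    Summable fun i => a i / b ^ (i + 1) := by
  set C := ∑ j ∈ range p, |a j|
  have hbound (i : ℕ) : |a i| ≤ C := by
    rw [← ha.map_mod_nat i]
    exact single_le_sum (f := fun j => |a j|) (fun j _ => abs_nonneg _)
      (mem_range.2 (Nat.mod_lt i hp))
  have hb0 : 0 < b := by linarith
  refine Summable.of_norm_bounded
    ((summable_geometric_of_lt_one (by positivity) (inv_lt_one_of_one_lt₀ hb)).mul_left (C / b))
    fun i => ?_
  rw [Real.norm_eq_abs, abs_div, abs_of_pos (pow_pos hb0 _), inv_pow, pow_succ]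
  calc |a i| / (b ^ i * b) ≤ C / (b ^ i * b) := by gcongr; exact hbound i
    _ = C / b * (b ^ i)⁻¹ := by field_simp

theorem tsum_div_pow (ha : Periodic a p) (hp : 0 < p) (hb : 1 < b) :
    ∑' i, a i / b ^ (i + 1) = (∑ i ∈ range p, a i * b ^ (p - 1 - i)) / (b ^ p - 1) := by
  have hb0 : 0 < b := by linarith
  have hbp : 1 < b ^ p := one_lt_pow₀ hb hp.ne'
  have hshift (i : ℕ) : a (i + p) / b ^ (i + p + 1) = a i / b ^ (i + 1) / b ^ p := by
    rw [ha, add_right_comm, pow_add, div_div]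
  have hblock : ∑ i ∈ range p, a i / b ^ (i + 1) =
      (∑ i ∈ range p, a i * b ^ (p - 1 - i)) / b ^ p := by
    rw [sum_div]
    refine sum_congr rfl fun i hi => ?_
    rw [div_eq_div_iff (by positivity) (by positivity), mul_assoc, ← pow_add,
      show p - 1 - i + (i + 1) = p by have := mem_range.1 hi; omega]
  have hsplit := (ha.summable_div_pow hp hb).sum_add_tsum_nat_add p
  simp only [hshift, tsum_div_const, hblock] at hsplit
  rw [eq_div_iff (by linarith)]
  field_simp at hsplit
  linarith

end Function.Periodic

section DigitSums

variable {r : ℕ}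

theorem sum_mul_pow_two_mul_sub (d : Fin r → ℕ) (b : ℕ) :
    ∑ j : Fin r, d j * b ^ (2 * r - 1 - j) = b ^ r * ∑ j : Fin r, d j * b ^ (r - 1 - j) := by
  rw [mul_sum]
  refine sum_congr rfl fun j _ => ?_
  rw [show 2 * r - 1 - j = r + (r - 1 - j) by omega, pow_add]
  ring

theorem sum_sub_one_mul_pow_rev (b : ℕ) :
    ∑ j : Fin r, (b - 1) * b ^ (r - 1 - j) = b ^ r - 1 := by
  rw [Fin.sum_univ_eq_sum_range (fun i => (b - 1) * b ^ (r - 1 - i)),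
    sum_range_reflect (fun i => (b - 1) * b ^ i), ← mul_sum]
  rcases b with _ | c
  · rcases r.eq_zero_or_pos with rfl | hr <;> simp [*]
  · rw [Nat.add_sub_cancel, ← geom_sum_mul_add c r, mul_comm, Nat.add_sub_cancel]

theorem sum_complement_digits_add_sum (d : Fin r → ℕ) {b : ℕ} (hd : ∀ j, d j ≤ b - 1) :
    ∑ j : Fin r, (b - 1 - d j) * b ^ (r - 1 - j) + ∑ j : Fin r, d j * b ^ (r - 1 - j) =
      b ^ r - 1 := by
  rw [← sum_add_distrib, ← sum_sub_one_mul_pow_rev]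
  simp_rw [← add_mul, Nat.sub_add_cancel (hd _)]

theorem sum_block_add_complement (d : Fin r → ℕ) {b : ℕ} (hd : ∀ j, d j ≤ b - 1) :
    ∑ j : Fin r, d j * b ^ (2 * r - 1 - j) + ∑ j : Fin r, (b - 1 - d j) * b ^ (r - 1 - j) =
      (∑ j : Fin r, d j * b ^ (r - 1 - j) + 1) * (b ^ r - 1) := by
  have hsum := sum_complement_digits_add_sum d hd
  rw [sum_mul_pow_two_mul_sub]
  generalize ∑ j : Fin r, d j * b ^ (r - 1 - j) = A at hsum ⊢
  generalize b ^ r = x at hsum ⊢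
  rcases x with _ | x
  · simp_all
  · rw [Nat.add_sub_cancel] at hsum ⊢
    rw [← hsum]
    ring

end DigitSums

section AlternateBlockDigits

variable {r : ℕ} [NeZero r]

def alternateBlockDigits (ω : Fin r → ℕ) (i : ℕ) : ℕ :=
  if Even (i / r) then ω (Fin.ofNat r i) else 2 - ω (Fin.ofNat r i)

variable (ω : Fin r → ℕ)

theorem alternateBlockDigits_periodic : Function.Periodic (alternateBlockDigits ω) (2 * r) := by
  intro i
  have hdiv : (i + 2 * r) / r = i / r + 2 := by
    rw [Nat.add_mul_div_right _ _ (NeZero.pos r)]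
  have hcast : Fin.ofNat r (i + 2 * r) = Fin.ofNat r i := by
    ext
    simp
  simp only [alternateBlockDigits, hdiv, hcast, Nat.even_add, even_two, iff_true]

theorem alternateBlockDigits_eq_zero_or_eq_two (hω : ∀ j, ω j = 0 ∨ ω j = 2) (i : ℕ) :
    alternateBlockDigits ω i = 0 ∨ alternateBlockDigits ω i = 2 := by
  unfold alternateBlockDigits
  have := hω (Fin.ofNat r i)
  split_ifs <;> omega

theorem sum_range_alternateBlockDigits_mul_pow (b : ℕ) :
    ∑ i ∈ range (2 * r), alternateBlockDigits ω i * b ^ (2 * r - 1 - i) =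
      ∑ j : Fin r, ω j * b ^ (2 * r - 1 - j) + ∑ j : Fin r, (2 - ω j) * b ^ (r - 1 - j) := by
  rw [two_mul, sum_range_add, ← two_mul]
  simp only [← Fin.sum_univ_eq_sum_range]
  congr 1 <;> refine sum_congr rfl fun j _ => ?_
  · have hj : (j : ℕ) / r = 0 := Nat.div_eq_of_lt j.isLt
    simp [alternateBlockDigits, hj]
  · have hj : (r + j) / r = 1 := by
      rw [Nat.add_div_left _ (NeZero.pos r), Nat.div_eq_of_lt j.isLt]
    have hk : Fin.ofNat r (r + j) = j := by ext; simp [Nat.mod_eq_of_lt j.isLt]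
    rw [alternateBlockDigits, if_neg (by simp [hj]), hk,
      show 2 * r - 1 - (r + j) = r - 1 - j by omega]

end AlternateBlockDigits

theorem Rat.den_natCast_div_natCast_dvd (n d : ℕ) : ((n : ℚ) / d).den ∣ d := by
  have := Rat.den_dvd n d
  rw [Rat.divInt_eq_div] at this
  push_cast at this
  exact Int.natCast_dvd_natCast.mp this

theorem den_mul_pow_sub_one_div_pow_two_mul_sub_one_dvd {b : ℕ} (hb : 1 < b) {r : ℕ}
    (hr : 0 < r) (A : ℕ) :
    (((A * (b ^ r - 1) : ℕ) : ℚ) / (b ^ (2 * r) - 1)).den ∣ b ^ r + 1 := by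
  have hpos : (b : ℚ) ^ r - 1 ≠ 0 := by
    have : (1 : ℚ) < b ^ r := one_lt_pow₀ (by exact_mod_cast hb) hr.ne'
    linarith
  rw [Nat.cast_mul, Nat.cast_pred (by positivity),
    show (b : ℚ) ^ (2 * r) - 1 = (b ^ r + 1) * (b ^ r - 1) by ring, Nat.cast_pow,
    mul_div_mul_right _ _ hpos]
  exact_mod_cast Rat.den_natCast_div_natCast_dvd A (b ^ r + 1)

/-- For `ω ∈ {0,2}^r` with digit-swap `ω̄`, the purely periodic base-3 number
with repeating block `ωω̄` lies in the Cantor set and its reduced denominator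
divides `3^r + 1`. -/
theorem stmt_14 (r : ℕ) (hr : 0 < r) (ω : Fin r → ℕ) (hω : ∀ j, ω j = 0 ∨ ω j = 2) :
    ((((∑ j : Fin r, ω j * 3 ^ (2 * r - 1 - (j : ℕ)) +
        ∑ j : Fin r, (2 - ω j) * 3 ^ (r - 1 - (j : ℕ)) : ℕ) : ℝ) /
          (3 ^ (2 * r) - 1)) ∈ cantorMiddleThirds) ∧
    (((∑ j : Fin r, ω j * 3 ^ (2 * r - 1 - (j : ℕ)) +
        ∑ j : Fin r, (2 - ω j) * 3 ^ (r - 1 - (j : ℕ)) : ℕ) : ℚ) /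
          (3 ^ (2 * r) - 1)).den ∣ 3 ^ r + 1 := by
  have : NeZero r := ⟨hr.ne'⟩
  have hdigit (j : Fin r) : ω j ≤ 3 - 1 := by rcases hω j with h | h <;> omega
  refine ⟨⟨alternateBlockDigits ω, alternateBlockDigits_eq_zero_or_eq_two ω hω, ?_⟩, ?_⟩
  · have hper : Function.Periodic (fun i => (alternateBlockDigits ω i : ℝ)) (2 * r) :=
      (alternateBlockDigits_periodic ω).comp _
    rw [eq_comm, hper.tsum_div_pow (by omega) (by norm_num),
      ← sum_range_alternateBlockDigits_mul_pow]
    push_cast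
    rfl
  · rw [sum_block_add_complement ω hdigit]
    exact den_mul_pow_sub_one_div_pow_two_mul_sub_one_dvd (by norm_num) hr _
end
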